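/- Let a ∈ ℝ^{2×2} be symmetric of rank one. Define q(ξ) := 2‖aξ‖² − ⟨aξ, ξ⟩² for ξ ∈ ℝ², g := max_{ξ ∈ S¹} q(ξ), and S := {ξ ∈ S¹ : q(ξ) = g}. Then there exists a constant c > 0 such that g − q(ξ) ≥ c·dist(ξ, S)⁴ for all ξ ∈ S¹, but there exists NO constant c > 0 such that g − q(ξ) ≥ c·dist(ξ, S)² for all ξ ∈ S¹. -/

import Mathlib

/-- The multiplier `q(ξ) = 2‖aξ‖² - ⟨aξ, ξ⟩²` for `ξ ∈ ℝ²`. -/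
noncomputable def qcc (a : Matrix (Fin 2) (Fin 2) ℝ) (ξ : EuclideanSpace ℝ (Fin 2)) : ℝ :=
  2 * (∑ i, (∑ j, a i j * ξ j) ^ 2) - (∑ i, ξ i * ∑ j, a i j * ξ j) ^ 2

/-!
A symmetric rank-one matrix is `a = l v vᵀ` with `l ≠ 0` and `‖v‖ = 1`. Writing `t = ⟨v, ξ⟩`,
this gives `q(ξ) = l² (2t² - t⁴)`, so `g = l²`, `g - q(ξ) = l² (1 - t²)²` and `S = {v, -v}`.
On the unit circle `‖ξ ∓ v‖² = 2 ∓ 2t`, and the smaller of the two is at most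
`2 (1 - t²)`, which is the quartic bound. Near `v`, however, `dist(ξ, S)² = 2 (1 - t)` is
of first order in `1 - t` while `g - q(ξ)` is of second order, so no quadratic bound holds.
-/

open scoped RealInnerProductSpace

theorem Metric.infDist_pair {α : Type*} [PseudoMetricSpace α] (x y z : α) :
    infDist x {y, z} = min (dist x y) (dist x z) := by
  refine le_antisymm (le_min (infDist_le_dist_of_mem (by simp))
    (infDist_le_dist_of_mem (by simp))) ((le_infDist (by simp)).2 ?_)
  rintro w (rfl | rfl)
  exacts [min_le_left _ _, min_le_right _ _]

section RankOneMultiplier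

variable {E : Type*} [NormedAddCommGroup E] [InnerProductSpace ℝ E] {v w ξ : E}

theorem dist_sq_eq_of_norm_eq_one (hv : ‖v‖ = 1) (hξ : ‖ξ‖ = 1) :
    dist ξ v ^ 2 = 2 - 2 * ⟪v, ξ⟫ := by
  rw [dist_eq_norm, norm_sub_sq_real, hv, hξ, real_inner_comm]; ring

theorem dist_neg_sq_eq_of_norm_eq_one (hv : ‖v‖ = 1) (hξ : ‖ξ‖ = 1) :
    dist ξ (-v) ^ 2 = 2 + 2 * ⟪v, ξ⟫ := by
  rw [dist_eq_norm, sub_neg_eq_add, norm_add_sq_real, hv, hξ, real_inner_comm]; ring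

theorem infDist_pair_neg_sq_le (hv : ‖v‖ = 1) (hξ : ‖ξ‖ = 1) :
    Metric.infDist ξ {v, -v} ^ 2 ≤ 2 * (1 - ⟪v, ξ⟫ ^ 2) := by
  have hD : 0 ≤ min (dist ξ v) (dist ξ (-v)) := le_min dist_nonneg dist_nonneg
  have h1 := real_inner_le_one_of_norm_eq_one hv hξ
  have h2 := neg_one_le_real_inner_of_norm_eq_one hv hξ
  rw [Metric.infDist_pair]
  rcases le_total 0 ⟪v, ξ⟫ with ht | ht
  · calc min (dist ξ v) (dist ξ (-v)) ^ 2 ≤ dist ξ v ^ 2 := by gcongr; exact min_le_left _ _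
      _ = 2 - 2 * ⟪v, ξ⟫ := dist_sq_eq_of_norm_eq_one hv hξ
      _ ≤ 2 * (1 - ⟪v, ξ⟫ ^ 2) := by nlinarith
  · calc min (dist ξ v) (dist ξ (-v)) ^ 2 ≤ dist ξ (-v) ^ 2 := by gcongr; exact min_le_right _ _
      _ = 2 + 2 * ⟪v, ξ⟫ := dist_neg_sq_eq_of_norm_eq_one hv hξ
      _ ≤ 2 * (1 - ⟪v, ξ⟫ ^ 2) := by nlinarith

theorem infDist_pair_neg_sq_of_inner_nonneg (hv : ‖v‖ = 1) (hξ : ‖ξ‖ = 1) (ht : 0 ≤ ⟪v, ξ⟫) :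
    Metric.infDist ξ {v, -v} ^ 2 = 2 - 2 * ⟪v, ξ⟫ := by
  have hle : dist ξ v ≤ dist ξ (-v) := by
    rw [← pow_le_pow_iff_left₀ dist_nonneg dist_nonneg two_ne_zero,
      dist_sq_eq_of_norm_eq_one hv hξ, dist_neg_sq_eq_of_norm_eq_one hv hξ]
    linarith
  rw [Metric.infDist_pair, min_eq_left hle, dist_sq_eq_of_norm_eq_one hv hξ]

noncomputable def rankOneMultiplier (l : ℝ) (v ξ : E) : ℝ :=
  l ^ 2 * (2 * ⟪v, ξ⟫ ^ 2 - ⟪v, ξ⟫ ^ 4)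

theorem sq_sub_rankOneMultiplier (l : ℝ) (v ξ : E) :
    l ^ 2 - rankOneMultiplier l v ξ = l ^ 2 * (1 - ⟪v, ξ⟫ ^ 2) ^ 2 := by
  unfold rankOneMultiplier; ring

theorem isGreatest_rankOneMultiplier (l : ℝ) (hv : ‖v‖ = 1) :
    IsGreatest {y | ∃ ξ : E, ‖ξ‖ = 1 ∧ y = rankOneMultiplier l v ξ} (l ^ 2) := by
  refine ⟨⟨v, hv, ?_⟩, ?_⟩
  · rw [rankOneMultiplier, real_inner_self_eq_norm_sq, hv]; ring
  · rintro _ ⟨ξ, -, rfl⟩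
    have := sq_sub_rankOneMultiplier l v ξ
    nlinarith [mul_nonneg (sq_nonneg l) (sq_nonneg (1 - ⟪v, ξ⟫ ^ 2))]

theorem rankOneMultiplier_eq_sq_iff {l : ℝ} (hl : l ≠ 0) (hv : ‖v‖ = 1) (hξ : ‖ξ‖ = 1) :
    rankOneMultiplier l v ξ = l ^ 2 ↔ ξ = v ∨ ξ = -v :=
  calc rankOneMultiplier l v ξ = l ^ 2 ↔ l ^ 2 * (1 - ⟪v, ξ⟫ ^ 2) ^ 2 = 0 := by
        rw [← sq_sub_rankOneMultiplier, sub_eq_zero, eq_comm]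
    _ ↔ ⟪v, ξ⟫ ^ 2 = 1 := by
        rw [mul_eq_zero, or_iff_right (pow_ne_zero 2 hl), pow_eq_zero_iff two_ne_zero,
          sub_eq_zero, eq_comm]
    _ ↔ v = ξ ∨ v = -ξ := by
        rw [sq_eq_one_iff, inner_eq_one_iff_of_norm_eq_one hv hξ,
          inner_eq_neg_one_iff_of_norm_eq_one hv hξ]
    _ ↔ ξ = v ∨ ξ = -v := by rw [eq_comm, ← neg_eq_iff_eq_neg, eq_comm (a := -v)]

theorem setOf_rankOneMultiplier_eq_sq {l : ℝ} (hl : l ≠ 0) (hv : ‖v‖ = 1) :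
    {η : E | ‖η‖ = 1 ∧ rankOneMultiplier l v η = l ^ 2} = {v, -v} := by
  ext η
  constructor
  · rintro ⟨hη, hq⟩
    exact (rankOneMultiplier_eq_sq_iff hl hv hη).1 hq
  · intro h
    have hη : ‖η‖ = 1 := by rcases h with rfl | rfl <;> simp [hv]
    exact ⟨hη, (rankOneMultiplier_eq_sq_iff hl hv hη).2 h⟩

theorem rankOneMultiplier_quartic_bound (l : ℝ) (hv : ‖v‖ = 1) (hξ : ‖ξ‖ = 1) :
    l ^ 2 / 4 * Metric.infDist ξ {v, -v} ^ 4 ≤ l ^ 2 - rankOneMultiplier l v ξ := by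
  have hD := infDist_pair_neg_sq_le hv hξ
  have hD4 : Metric.infDist ξ {v, -v} ^ 4 ≤ (2 * (1 - ⟪v, ξ⟫ ^ 2)) ^ 2 := by
    rw [show Metric.infDist ξ {v, -v} ^ 4 = (Metric.infDist ξ {v, -v} ^ 2) ^ 2 by ring]
    exact pow_le_pow_left₀ (sq_nonneg _) hD 2
  rw [sq_sub_rankOneMultiplier]
  nlinarith [sq_nonneg l]

theorem exists_norm_eq_one_inner_eq (hv : ‖v‖ = 1) (hw : ‖w‖ = 1) (hvw : ⟪v, w⟫ = 0) {t : ℝ}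
    (ht : t ^ 2 ≤ 1) : ∃ ξ : E, ‖ξ‖ = 1 ∧ ⟪v, ξ⟫ = t := by
  set s := √(1 - t ^ 2)
  have hs : s ^ 2 = 1 - t ^ 2 := Real.sq_sqrt (by linarith)
  refine ⟨t • v + s • w, ?_, ?_⟩
  · have hsq : ‖t • v + s • w‖ ^ 2 = 1 := by
      rw [norm_add_sq_real, norm_smul, norm_smul, real_inner_smul_left, real_inner_smul_right,
        hvw, hv, hw, Real.norm_eq_abs, Real.norm_eq_abs]
      nlinarith [sq_abs t, sq_abs s]
    exact (pow_eq_one_iff_of_nonneg (norm_nonneg _) two_ne_zero).1 hsq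
  · rw [inner_add_right, real_inner_smul_right, real_inner_smul_right, hvw,
      real_inner_self_eq_norm_sq, hv]
    ring

theorem not_exists_rankOneMultiplier_quadratic_bound {l : ℝ} (hl : l ≠ 0) (hv : ‖v‖ = 1)
    (hw : ‖w‖ = 1) (hvw : ⟪v, w⟫ = 0) :
    ¬ ∃ c : ℝ, 0 < c ∧ ∀ ξ : E, ‖ξ‖ = 1 →
      c * Metric.infDist ξ {v, -v} ^ 2 ≤ l ^ 2 - rankOneMultiplier l v ξ := by
  rintro ⟨c, hc, hbound⟩
  set δ := min 1 (c / (4 * l ^ 2))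
  have hδ : 0 < δ := lt_min one_pos (by positivity)
  have hδ1 : δ ≤ 1 := min_le_left _ _
  have hδc : 4 * l ^ 2 * δ ≤ c := by
    have := min_le_right 1 (c / (4 * l ^ 2))
    rwa [le_div_iff₀' (by positivity)] at this
  obtain ⟨ξ, hξ, hvξ⟩ := exists_norm_eq_one_inner_eq hv hw hvw (t := 1 - δ) (by nlinarith)
  have h := hbound ξ hξ
  rw [infDist_pair_neg_sq_of_inner_nonneg hv hξ (by linarith), sq_sub_rankOneMultiplier, hvξ] at h
  have : c * (2 * δ) ≤ c * δ :=
    calc c * (2 * δ) = c * (2 - 2 * (1 - δ)) := by ring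
      _ ≤ l ^ 2 * (1 - (1 - δ) ^ 2) ^ 2 := h
      _ = l ^ 2 * δ ^ 2 * (2 - δ) ^ 2 := by ring
      _ ≤ l ^ 2 * δ ^ 2 * 4 := by gcongr; nlinarith
      _ = 4 * l ^ 2 * δ * δ := by ring
      _ ≤ c * δ := by gcongr
  nlinarith [mul_pos hc hδ]

end RankOneMultiplier

open Matrix

theorem exists_rankOne_factorization_of_mul_eq_sq {p r s : ℝ} (hprs : p * s = r ^ 2)
    (hne : p ≠ 0 ∨ s ≠ 0) : ∃ l : ℝ, l ≠ 0 ∧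
      ∃ x y : ℝ, x ^ 2 + y ^ 2 = 1 ∧ p = l * x * x ∧ r = l * x * y ∧ s = l * y * y := by
  by_cases hp : p = 0
  · have hr : r = 0 := by simpa [hp] using hprs.symm
    exact ⟨s, hne.resolve_left (not_not.2 hp), 0, 1, by simp [hp, hr]⟩
  · have hn : 0 < p ^ 2 + r ^ 2 := by positivity
    set n := √(p ^ 2 + r ^ 2)
    have hn0 : n ≠ 0 := (Real.sqrt_pos.2 hn).ne'
    have hn2 : n ^ 2 = p ^ 2 + r ^ 2 := Real.sq_sqrt hn.le
    refine ⟨n ^ 2 / p, by positivity, p / n, r / n, ?_, ?_, ?_, ?_⟩ <;> field_simp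
    · exact hn2.symm
    · linear_combination hprs

theorem Matrix.IsSymm.exists_eq_smul_vecMulVec_of_rank_eq_one {a : Matrix (Fin 2) (Fin 2) ℝ}
    (ha : a.IsSymm) (hrank : a.rank = 1) : ∃ l : ℝ, l ≠ 0 ∧
      ∃ v : EuclideanSpace ℝ (Fin 2), ‖v‖ = 1 ∧ a = l • vecMulVec v v := by
  have ha10 : a 1 0 = a 0 1 := ha.apply 0 1
  have hdet : a 0 0 * a 1 1 = a 0 1 ^ 2 := by
    have : ¬ IsUnit a := fun hu => by simpa [hrank] using rank_of_isUnit a hu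
    rw [isUnit_iff_isUnit_det, isUnit_iff_ne_zero, not_not, det_fin_two, ha10] at this
    linear_combination this
  have hne : a 0 0 ≠ 0 ∨ a 1 1 ≠ 0 := by
    by_contra! h
    have h01 : a 0 1 = 0 := by simpa [h] using hdet.symm
    have : a = 0 := by
      ext i j
      fin_cases i <;> fin_cases j <;> simp [h, h01, ha10]
    simp [this] at hrank
  obtain ⟨l, hl, x, y, hxy, hp, hr, hs⟩ := exists_rankOne_factorization_of_mul_eq_sq hdet hne
  refine ⟨l, hl, !₂[x, y], by simp [EuclideanSpace.norm_eq, Fin.sum_univ_two, hxy], ?_⟩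
  ext i j
  fin_cases i <;> fin_cases j <;> simp [hp, hr, hs, ha10, mul_assoc, mul_comm y x]

theorem qcc_smul_vecMulVec (l : ℝ) {v : EuclideanSpace ℝ (Fin 2)} (hv : ‖v‖ = 1) :
    qcc (l • vecMulVec v v) = rankOneMultiplier l v := by
  have hv2 : v 0 ^ 2 + v 1 ^ 2 = 1 := by
    simpa [EuclideanSpace.real_norm_sq_eq, Fin.sum_univ_two, hv] using
      (EuclideanSpace.real_norm_sq_eq v).symm
  ext ξ
  simp only [qcc, rankOneMultiplier, PiLp.inner_apply, Fin.sum_univ_two, Matrix.smul_apply,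
    vecMulVec_apply, smul_eq_mul, RCLike.inner_apply, conj_trivial]
  linear_combination (2 * l ^ 2 * (v 0 * ξ 0 + v 1 * ξ 1) ^ 2) * hv2

theorem EuclideanSpace.exists_norm_eq_one_inner_eq_zero {v : EuclideanSpace ℝ (Fin 2)}
    (hv : ‖v‖ = 1) : ∃ w : EuclideanSpace ℝ (Fin 2), ‖w‖ = 1 ∧ ⟪v, w⟫ = 0 := by
  refine ⟨!₂[-v 1, v 0], ?_, ?_⟩
  · simpa [EuclideanSpace.norm_eq, Fin.sum_univ_two, add_comm] using hv
  · simp [PiLp.inner_apply, Fin.sum_univ_two, mul_comm]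

/-- For a symmetric rank-one `2×2` matrix `a`, with `S` the set of maximizers of `q` on the
unit circle, one has `g - q(ξ) ≥ c·dist(ξ,S)⁴` for some `c > 0`, but no quadratic lower
bound holds: the maximal vanishing order is two. -/
theorem statement16 (a : Matrix (Fin 2) (Fin 2) ℝ) (ha : a.IsSymm) (hrank : a.rank = 1) :
    ∃ g : ℝ,
      IsGreatest {y : ℝ | ∃ ξ : EuclideanSpace ℝ (Fin 2), ‖ξ‖ = 1 ∧ y = qcc a ξ} g ∧
      (∃ c : ℝ, 0 < c ∧ ∀ ξ : EuclideanSpace ℝ (Fin 2), ‖ξ‖ = 1 →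
        c * (Metric.infDist ξ {η : EuclideanSpace ℝ (Fin 2) | ‖η‖ = 1 ∧ qcc a η = g}) ^ 4 ≤
          g - qcc a ξ) ∧
      ¬ (∃ c : ℝ, 0 < c ∧ ∀ ξ : EuclideanSpace ℝ (Fin 2), ‖ξ‖ = 1 →
        c * (Metric.infDist ξ {η : EuclideanSpace ℝ (Fin 2) | ‖η‖ = 1 ∧ qcc a η = g}) ^ 2 ≤
          g - qcc a ξ) := by
  obtain ⟨l, hl, v, hv, rfl⟩ := ha.exists_eq_smul_vecMulVec_of_rank_eq_one hrank
  obtain ⟨w, hw, hvw⟩ := EuclideanSpace.exists_norm_eq_one_inner_eq_zero hv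
  refine ⟨l ^ 2, ?_⟩
  rw [qcc_smul_vecMulVec l hv, setOf_rankOneMultiplier_eq_sq hl hv]
  exact ⟨isGreatest_rankOneMultiplier l hv,
    ⟨l ^ 2 / 4, by positivity, fun ξ hξ => rankOneMultiplier_quartic_bound l hv hξ⟩,
    not_exists_rankOneMultiplier_quadratic_bound hl hv hw hvw⟩
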